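/- The map π : M̄³ → M², π(r, θ, z) = (r, θ − (a/b) z), is a Riemannian submersion when M̄³ carries the product metric dr² + ψ(r)² dθ² + dz² and M² carries the metric ds² = dr² + (b² ψ² / (a² ψ² + b²)) dθ². -/
import Mathlib


/-- `π(r, θ, z) = (r, θ − (a/b) z)` is a Riemannian submersion from
`M̄³` with product metric `dr² + ψ(r)² dθ² + dz²` onto `M²` with metric
`ds² = dr² + (b²ψ²/(a²ψ² + b²)) dθ²`: it is a surjective submersion, and its
differential is an isometry from the horizontal subspace (the `g`-orthogonal
complement of `ker π_*`) onto the tangent space of the target. -/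
theorem projection_is_riemannian_submersion
    (ψ : ℝ → ℝ) (hψpos : ∀ r, 0 < ψ r)
    (a b : ℝ) (hb : b ≠ 0)
    -- the product metric on M̄³
    (g : ℝ × ℝ × ℝ → (ℝ × ℝ × ℝ) → (ℝ × ℝ × ℝ) → ℝ)
    (hg : ∀ p v w, g p v w =
      v.1 * w.1 + (ψ p.1) ^ 2 * v.2.1 * w.2.1 + v.2.2 * w.2.2)
    -- the quotient metric ds² = dr² + (b²ψ²/(a²ψ²+b²)) dθ² on M²
    (gq : ℝ × ℝ → (ℝ × ℝ) → (ℝ × ℝ) → ℝ)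
    (hgq : ∀ q v w, gq q v w =
      v.1 * w.1 + (b ^ 2 * (ψ q.1) ^ 2 / (a ^ 2 * (ψ q.1) ^ 2 + b ^ 2)) * v.2 * w.2)
    (π : ℝ × ℝ × ℝ → ℝ × ℝ)
    (hπ : ∀ p, π p = (p.1, p.2.1 - (a / b) * p.2.2))
    -- the differential of π (π is affine in these coordinates)
    (dπ : (ℝ × ℝ × ℝ) →ₗ[ℝ] ℝ × ℝ)
    (hdπ : ∀ v, dπ v = (v.1, v.2.1 - (a / b) * v.2.2)) :
    -- π is a surjective submersion ...
    Function.Surjective π ∧ Function.Surjective dπ ∧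
    (∀ p, fderiv ℝ π p = dπ) ∧
    -- ... whose differential restricted to horizontal vectors is an isometry
    (∀ (p : ℝ × ℝ × ℝ) (v w : ℝ × ℝ × ℝ),
      (∀ u, dπ u = 0 → g p v u = 0) → (∀ u, dπ u = 0 → g p w u = 0) →
      gq (π p) (dπ v) (dπ w) = g p v w) := by
  have hfun : π = dπ := by
    funext p; rw [hπ, hdπ]
  refine ⟨?_, ?_, ?_, ?_⟩
  · intro q
    exact ⟨(q.1, q.2, 0), by simp [hπ]⟩
  · intro q
    exact ⟨(q.1, q.2, 0), by simp [hdπ]⟩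
  · intro p
    have : fderiv ℝ π p = LinearMap.toContinuousLinearMap dπ := by
      rw [hfun]
      exact ((LinearMap.toContinuousLinearMap dπ).hasFDerivAt (x := p)).fderiv
    rw [this, LinearMap.coe_toContinuousLinearMap]
  · intro p v w hv hw
    -- the vertical vector
    have hden : a ^ 2 * (ψ p.1) ^ 2 + b ^ 2 > 0 := by
      have := sq_nonneg (a * ψ p.1)
      have hb2 : 0 < b ^ 2 := by positivity
      nlinarith
    have hker : dπ (0, a / b, 1) = 0 := by
      rw [hdπ]; simp
    have h1 : g p v (0, a / b, 1) = 0 := hv _ hker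
    have h2 : g p w (0, a / b, 1) = 0 := hw _ hker
    rw [hg] at h1 h2
    simp only at h1 h2
    -- so v.2.2 = -(a/b) ψ² v.2.1, etc.
    have hv2 : v.2.2 = -(a / b) * (ψ p.1) ^ 2 * v.2.1 := by
      field_simp at h1 ⊢; linarith
    have hw2 : w.2.2 = -(a / b) * (ψ p.1) ^ 2 * w.2.1 := by
      field_simp at h2 ⊢; linarith
    rw [hgq, hg, hdπ, hdπ, hπ]
    simp only
    rw [hv2, hw2]
    have hdne : a ^ 2 * (ψ p.1) ^ 2 + b ^ 2 ≠ 0 := ne_of_gt hden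
    field_simp
    ring
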